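/- arXiv:1508.04266 — 2 statements merged into one kernel-verified Lean document; each statement's English description precedes it below -/
import Mathlib

section
/- Let X be a random vector in ℝ^d whose cumulant generating function φ(t) = log E[exp⟨X,t⟩] is finite for every t ∈ ℝ^d, and suppose that for all t₁, t₂, h ∈ ℝ^d and all δ ∈ [0,1], φ((1−δ)t₁ + δt₂) − (1−δ)φ(t₁) − δφ(t₂) = φ((1−δ)t₁ + δt₂ + h) − (1−δ)φ(t₁ + h) − δφ(t₂ + h). Then the law of X is the multivariate Gaussian distribution on ℝ^d with some mean vector μ ∈ ℝ^d and some symmetric positive semidefinite covariance matrix Σ. -/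
/-!
The hypothesis says that for every `h` the map `t ↦ φ (t + h) - φ t` is affine along segments;
as `φ 0 = 0`, subtracting `φ h` makes it vanish at `0`, so the polarization
`φ (x + y) - φ x - φ y` is a symmetric bilinear form `B`. Then `t ↦ φ t - B t t / 2` is additive,
and continuous along lines because a cumulant generating function is, hence linear:
`φ t = ⟨μ, t⟩ + ½ B t t`. Finally `B t t = φ (2t) - 2 φ t ≥ 0` since
`E[e^{⟨X,t⟩}]² ≤ E[e^{⟨X,2t⟩}]`.
-/

open MeasureTheory Matrix Real

/-- A probability measure `ν` on `ℝ^d` is the multivariate Gaussian distribution with mean `μ`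
and symmetric positive semidefinite covariance matrix `S` iff it is characterized by its
moment generating function `t ↦ exp(⟨μ,t⟩ + ½⟨t,St⟩)`. -/
def IsMultivariateGaussian {d : ℕ} (ν : Measure (Fin d → ℝ))
    (μ : Fin d → ℝ) (S : Matrix (Fin d) (Fin d) ℝ) : Prop :=
  IsProbabilityMeasure ν ∧
    ∀ t : Fin d → ℝ, ∫ x, Real.exp (x ⬝ᵥ t) ∂ν = Real.exp (μ ⬝ᵥ t + (1 / 2) * (t ⬝ᵥ S.mulVec t))

section Algebra

variable {E F : Type*} [AddCommGroup E] [Module ℝ E] [AddCommGroup F] [Module ℝ F]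

theorem exists_linearMap_of_map_segment {f : E → F} (h0 : f 0 = 0)
    (hf : ∀ (a b : E) (δ : ℝ), δ ∈ Set.Icc (0 : ℝ) 1 →
      f ((1 - δ) • a + δ • b) = (1 - δ) • f a + δ • f b) :
    ∃ L : E →ₗ[ℝ] F, ⇑L = f := by
  have hsmul_unit (t : E) {δ : ℝ} (hδ : δ ∈ Set.Icc (0 : ℝ) 1) : f (δ • t) = δ • f t := by
    simpa [h0] using hf 0 t δ hδ
  have hadd (a b : E) : f (a + b) = f a + f b := by
    have hmid := hf a b (1 / 2) (by norm_num)
    have hhalf := hsmul_unit (a + b) (δ := 1 / 2) (by norm_num)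
    rw [show (1 - 1 / 2 : ℝ) • a + (1 / 2 : ℝ) • b = (1 / 2 : ℝ) • (a + b) by module, hhalf] at hmid
    calc f (a + b) = (2 : ℝ) • ((1 / 2 : ℝ) • f (a + b)) := by module
      _ = f a + f b := by rw [hmid]; module
  let g : E →+ F := AddMonoidHom.mk' f hadd
  have hsmul_nonneg (t : E) {c : ℝ} (hc : 0 ≤ c) : g (c • t) = c • g t := by
    rcases le_or_gt c 1 with hc1 | hc1
    · exact hsmul_unit t ⟨hc, hc1⟩
    · have hinv := hsmul_unit (c • t) (δ := c⁻¹) ⟨by positivity, inv_le_one_of_one_le₀ hc1.le⟩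
      rw [smul_smul, inv_mul_cancel₀ (by positivity), one_smul] at hinv
      change g t = c⁻¹ • g (c • t) at hinv
      rw [hinv, smul_smul, mul_inv_cancel₀ (by positivity), one_smul]
  refine ⟨{ g with map_smul' := fun c t => ?_ }, rfl⟩
  rcases le_total 0 c with hc | hc
  · exact hsmul_nonneg t hc
  · have := hsmul_nonneg t (neg_nonneg.mpr hc)
    rwa [neg_smul, map_neg, neg_smul, neg_inj] at this

theorem AddMonoidHom.map_smul_of_continuous_line [TopologicalSpace F] [IsTopologicalAddGroup F]
    [ContinuousSMul ℝ F] [T2Space F] (f : E →+ F)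
    (hf : ∀ t, Continuous fun s : ℝ => f (s • t)) (c : ℝ) (t : E) : f (c • t) = c • f t := by
  let g : ℝ →+ F := AddMonoidHom.mk' (fun s => f (s • t)) fun a b => by simp [add_smul]
  simpa [g] using map_real_smul g (hf t) c 1

variable {φ : E → ℝ}

theorem exists_bilinForm_eq_polar (h0 : φ 0 = 0)
    (hφ : ∀ (t₁ t₂ h : E) (δ : ℝ), δ ∈ Set.Icc (0 : ℝ) 1 →
      φ ((1 - δ) • t₁ + δ • t₂) - (1 - δ) * φ t₁ - δ * φ t₂
        = φ ((1 - δ) • t₁ + δ • t₂ + h) - (1 - δ) * φ (t₁ + h) - δ * φ (t₂ + h)) :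
    ∃ B : LinearMap.BilinForm ℝ E, ∀ x y, B x y = QuadraticMap.polar φ x y := by
  have hlin (y : E) : ∃ L : E →ₗ[ℝ] ℝ, ⇑L = fun x => QuadraticMap.polar φ x y := by
    refine exists_linearMap_of_map_segment (by simp [QuadraticMap.polar, h0]) fun a b δ hδ => ?_
    simp only [QuadraticMap.polar, smul_eq_mul]
    linear_combination -hφ a b y δ hδ
  choose L hL using hlin
  have hL' (x y : E) : L y x = QuadraticMap.polar φ x y := congrFun (hL y) x
  refine ⟨LinearMap.mk₂ ℝ (QuadraticMap.polar φ) (fun x₁ x₂ y => ?_) (fun c x y => ?_)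
    (fun x y₁ y₂ => ?_) (fun c x y => ?_), fun x y => rfl⟩
  · simp only [← hL', map_add]
  · simp only [← hL', map_smul]
  · simp only [QuadraticMap.polar_comm φ x, ← hL', map_add]
  · simp only [QuadraticMap.polar_comm φ x, ← hL', map_smul]

theorem exists_linearMap_eq_add_half_bilinForm {B : LinearMap.BilinForm ℝ E}
    (hB : ∀ x y, B x y = QuadraticMap.polar φ x y)
    (hφ : ∀ t, Continuous fun s : ℝ => φ (s • t)) :
    ∃ L : E →ₗ[ℝ] ℝ, ∀ t, φ t = L t + B t t / 2 := by
  have hsymm (x y : E) : B x y = B y x := by rw [hB, hB, QuadraticMap.polar_comm]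
  let r : E →+ ℝ := AddMonoidHom.mk' (fun t => φ t - B t t / 2) fun a b => by
    have hab := hB a b
    simp only [map_add, LinearMap.add_apply, QuadraticMap.polar] at hab ⊢
    rw [hsymm b a]
    linarith
  have hr : ∀ t, Continuous fun s : ℝ => r (s • t) := fun t => by
    simp only [r, AddMonoidHom.mk'_apply, map_smul, LinearMap.smul_apply, smul_eq_mul]
    exact (hφ t).sub (by fun_prop)
  refine ⟨{ r with map_smul' := r.map_smul_of_continuous_line hr }, fun t => ?_⟩
  simp [r]

end Algebra

theorem LinearMap.apply_eq_dotProduct {ι : Type*} [Fintype ι] [DecidableEq ι]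
    (L : (ι → ℝ) →ₗ[ℝ] ℝ) (t : ι → ℝ) : L t = (fun i => L (Pi.single i 1)) ⬝ᵥ t := by
  rw [L.pi_apply_eq_sum_univ t, dotProduct]
  refine Finset.sum_congr rfl fun i _ => ?_
  rw [smul_eq_mul, mul_comm]
  congr 2
  ext j
  simp [Pi.single_apply, eq_comm]

namespace ProbabilityTheory

variable {Ω : Type*} [MeasurableSpace Ω] {μ : Measure Ω} [IsProbabilityMeasure μ] {X : Ω → ℝ}

theorem continuous_cgf (h : ∀ t, Integrable (fun ω => exp (t * X ω)) μ) : Continuous (cgf X μ) :=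
  (continuous_mgf h).log fun t => (mgf_pos (h t)).ne'

theorem mgf_sq_le_mgf_two_mul {t : ℝ} (h₁ : Integrable (fun ω => exp (t * X ω)) μ)
    (h₂ : Integrable (fun ω => exp (2 * t * X ω)) μ) : mgf X μ t ^ 2 ≤ mgf X μ (2 * t) := by
  have hsq : (fun ω => exp (t * X ω) ^ 2) = fun ω => exp (2 * t * X ω) := by
    ext ω; rw [← exp_nat_mul]; push_cast; ring_nf
  have hL2 : MemLp (fun ω => exp (t * X ω)) 2 μ :=
    (memLp_two_iff_integrable_sq h₁.aestronglyMeasurable).2 (hsq ▸ h₂)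
  have := variance_nonneg (fun ω => exp (t * X ω)) μ
  rw [variance_eq_sub hL2] at this
  simp only [Pi.pow_apply, hsq] at this
  rw [mgf, mgf]
  linarith

theorem two_mul_cgf_le_cgf_two_mul {t : ℝ} (h₁ : Integrable (fun ω => exp (t * X ω)) μ)
    (h₂ : Integrable (fun ω => exp (2 * t * X ω)) μ) : 2 * cgf X μ t ≤ cgf X μ (2 * t) := by
  have := log_le_log (pow_pos (mgf_pos h₁) 2) (mgf_sq_le_mgf_two_mul h₁ h₂)
  rwa [log_pow, Nat.cast_ofNat] at this

end ProbabilityTheory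

open ProbabilityTheory

/-- If the everywhere-finite cumulant generating function of a random vector
`X` in `ℝ^d` satisfies the two-point shift-invariance identity, then the law of `X` is a
multivariate Gaussian distribution with some mean `μ` and some symmetric positive semidefinite
covariance matrix `Σ`. -/
theorem stmt_2 {Ω : Type*} [MeasurableSpace Ω] (P : Measure Ω) [IsProbabilityMeasure P]
    {d : ℕ} (X : Ω → (Fin d → ℝ)) (hX : Measurable X)
    (hint : ∀ t : Fin d → ℝ, Integrable (fun ω => Real.exp (X ω ⬝ᵥ t)) P)
    (φ : (Fin d → ℝ) → ℝ)
    (hφ : ∀ t, φ t = Real.log (∫ ω, Real.exp (X ω ⬝ᵥ t) ∂P))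
    (hstat : ∀ (t₁ t₂ h : Fin d → ℝ) (δ : ℝ), δ ∈ Set.Icc (0 : ℝ) 1 →
      φ ((1 - δ) • t₁ + δ • t₂) - (1 - δ) * φ t₁ - δ * φ t₂
        = φ ((1 - δ) • t₁ + δ • t₂ + h) - (1 - δ) * φ (t₁ + h) - δ * φ (t₂ + h)) :
    ∃ (μ : Fin d → ℝ) (S : Matrix (Fin d) (Fin d) ℝ), S.IsSymm ∧ S.PosSemidef ∧
      IsMultivariateGaussian (P.map X) μ S := by
  have hint_line (t : Fin d → ℝ) (s : ℝ) : Integrable (fun ω => exp (s * (X ω ⬝ᵥ t))) P := by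
    simpa [dotProduct_smul] using hint (s • t)
  have hcgf (t : Fin d → ℝ) (s : ℝ) : φ (s • t) = cgf (fun ω => X ω ⬝ᵥ t) P s := by
    simp [hφ, cgf, mgf, dotProduct_smul]
  have h0 : φ 0 = 0 := by simpa using hcgf 0 0
  have hline (t : Fin d → ℝ) : Continuous fun s : ℝ => φ (s • t) := by
    simpa only [hcgf] using continuous_cgf (hint_line t)
  have hdouble (t : Fin d → ℝ) : 2 * φ t ≤ φ (t + t) := by
    have h := two_mul_cgf_le_cgf_two_mul (hint_line t 1) (by simpa using hint_line t 2)
    rwa [mul_one, ← hcgf, ← hcgf, one_smul, two_smul] at h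
  obtain ⟨B, hB⟩ := exists_bilinForm_eq_polar h0 hstat
  obtain ⟨L, hL⟩ := exists_linearMap_eq_add_half_bilinForm hB hline
  have hBquad (t : Fin d → ℝ) : B t t = t ⬝ᵥ B.toMatrix' *ᵥ t := by
    rw [← Matrix.toBilin'_apply', Matrix.toBilin'_toMatrix']
  have hS : B.toMatrix'.IsSymm := LinearMap.BilinForm.isSymm_toMatrix'_iff_isSymm.2 <|
    LinearMap.BilinForm.isSymm_def.2 fun x y => by rw [hB, hB, QuadraticMap.polar_comm]
  refine ⟨fun i => L (Pi.single i 1), B.toMatrix', hS, ?_, ?_⟩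
  · refine PosSemidef.of_dotProduct_mulVec_nonneg (isHermitian_iff_isSymm.2 hS) fun t => ?_
    rw [star_trivial, ← hBquad, hB, QuadraticMap.polar]
    linarith [hdouble t]
  · refine ⟨Measure.isProbabilityMeasure_map hX.aemeasurable, fun t => ?_⟩
    rw [integral_map hX.aemeasurable (by fun_prop), ← exp_log (integral_exp_pos (hint t)), ← hφ,
      hL, hBquad, L.apply_eq_dotProduct]
    ring_nf
end

section
/- Let X be a random vector in ℝ^d whose cumulant generating function φ(t) = log E[exp⟨X,t⟩] is finite for every t ∈ ℝ^d. Then the following are equivalent: (i) for every n ∈ ℕ, all t₁,…,tₙ ∈ ℝ^d, every h ∈ ℝ^d, and all u₁,…,uₙ ∈ [0,1] with u₁+⋯+uₙ = 1, φ(∑ᵢ uᵢtᵢ) − ∑ᵢ uᵢφ(tᵢ) = φ(h + ∑ᵢ uᵢtᵢ) − ∑ᵢ uᵢφ(tᵢ + h); (ii) there exist μ ∈ ℝ^d and a symmetric positive semidefinite d×d real matrix Σ such that φ(t) = ⟨μ,t⟩ + ½⟨t, Σt⟩ for all t ∈ ℝ^d. -/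
/-!
By Hölder's inequality `φ` is convex, hence continuous. Taking `n = 2`, `u = (1/2, 1/2)` and
`t = (r, -r)` in (i) gives `φ (s + r) + φ (s - r) = 2 φ s + φ r + φ (-r)`: the odd part of `φ` is
additive and its even part satisfies the parallelogram law, so by continuity they are a linear
form and a quadratic form, the latter nonnegative by convexity. Conversely, for such `φ` every
difference `x ↦ φ (x + h) - φ x` is affine, and then both sides of (i) agree.
-/

open MeasureTheory Matrix Real QuadraticMap

theorem integral_exp_add_le {α : Type*} [MeasurableSpace α] {μ : Measure α} {f g : α → ℝ}
    (hf : Integrable (fun x => exp (f x)) μ) (hg : Integrable (fun x => exp (g x)) μ)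
    {a b : ℝ} (ha : 0 ≤ a) (hb : 0 ≤ b) (hab : a + b = 1) :
    ∫ x, exp (a * f x + b * g x) ∂μ ≤ (∫ x, exp (f x) ∂μ) ^ a * (∫ x, exp (g x) ∂μ) ^ b := by
  have holder := ENNReal.lintegral_mul_norm_pow_le hf.aemeasurable.ennreal_ofReal
    hg.aemeasurable.ennreal_ofReal ha hb hab
  have hpt : ∀ x, ENNReal.ofReal (exp (f x)) ^ a * ENNReal.ofReal (exp (g x)) ^ b
      = ENNReal.ofReal (exp (a * f x + b * g x)) := fun x => by
    rw [ENNReal.ofReal_rpow_of_nonneg (exp_pos _).le ha,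
      ENNReal.ofReal_rpow_of_nonneg (exp_pos _).le hb, ← ENNReal.ofReal_mul (by positivity),
      ← exp_mul, ← exp_mul, ← exp_add, mul_comm (f x), mul_comm (g x)]
  have hIf : 0 ≤ ∫ x, exp (f x) ∂μ := integral_nonneg fun x => (exp_pos _).le
  have hIg : 0 ≤ ∫ x, exp (g x) ∂μ := integral_nonneg fun x => (exp_pos _).le
  simp_rw [hpt, ← ofReal_integral_eq_lintegral_ofReal hf (.of_forall fun x => (exp_pos _).le),
    ← ofReal_integral_eq_lintegral_ofReal hg (.of_forall fun x => (exp_pos _).le)] at holder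
  rw [ENNReal.ofReal_rpow_of_nonneg hIf ha, ENNReal.ofReal_rpow_of_nonneg hIg hb,
    ← ENNReal.ofReal_mul (by positivity)] at holder
  have hfm : AEMeasurable f μ := hf.aemeasurable.log.congr (.of_forall fun x => log_exp (f x))
  have hgm : AEMeasurable g μ := hg.aemeasurable.log.congr (.of_forall fun x => log_exp (g x))
  rw [integral_eq_lintegral_of_nonneg_ae (.of_forall fun x => (exp_pos _).le) (by fun_prop)]
  exact ENNReal.toReal_le_of_le_ofReal (by positivity) holder

theorem convexOn_log_integral_exp_dotProduct {Ω ι : Type*} [MeasurableSpace Ω] [Fintype ι]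
    {μ : Measure Ω} [NeZero μ] {X : Ω → ι → ℝ}
    (hX : ∀ t, Integrable (fun ω => exp (X ω ⬝ᵥ t)) μ) :
    ConvexOn ℝ Set.univ fun t => log (∫ ω, exp (X ω ⬝ᵥ t) ∂μ) := by
  refine ⟨convex_univ, fun x _ y _ a b ha hb hab => ?_⟩
  have hI : ∀ t, 0 < ∫ ω, exp (X ω ⬝ᵥ t) ∂μ := fun t => integral_exp_pos (hX t)
  have hI_comb := hI (a • x + b • y)
  simp only [dotProduct_add, dotProduct_smul, smul_eq_mul] at hI_comb ⊢
  calc log (∫ ω, exp (a * (X ω ⬝ᵥ x) + b * (X ω ⬝ᵥ y)) ∂μ)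
      ≤ log ((∫ ω, exp (X ω ⬝ᵥ x) ∂μ) ^ a * (∫ ω, exp (X ω ⬝ᵥ y) ∂μ) ^ b) :=
        log_le_log hI_comb (integral_exp_add_le (hX x) (hX y) ha hb hab)
    _ = a * log (∫ ω, exp (X ω ⬝ᵥ x) ∂μ) + b * log (∫ ω, exp (X ω ⬝ᵥ y) ∂μ) := by
        rw [log_mul (rpow_pos_of_pos (hI x) a).ne' (rpow_pos_of_pos (hI y) b).ne',
          log_rpow (hI x), log_rpow (hI y)]

section FunctionalEquation

variable {E : Type*} [AddCommGroup E] {f : E → ℝ}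

noncomputable def evenPart (f : E → ℝ) (x : E) : ℝ := (f x + f (-x)) / 2

noncomputable def oddPart (f : E → ℝ) (x : E) : ℝ := (f x - f (-x)) / 2

theorem oddPart_add_evenPart (f : E → ℝ) (x : E) : oddPart f x + evenPart f x = f x := by
  unfold oddPart evenPart
  ring

theorem ConvexOn.map_zero_le_evenPart [Module ℝ E] (hf : ConvexOn ℝ Set.univ f) (x : E) :
    f 0 ≤ evenPart f x := by
  have h := hf.2 (Set.mem_univ x) (Set.mem_univ (-x)) (by norm_num : (0 : ℝ) ≤ 1 / 2)
    (by norm_num : (0 : ℝ) ≤ 1 / 2) (by norm_num)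
  rw [smul_neg, add_neg_cancel, smul_eq_mul, smul_eq_mul] at h
  unfold evenPart
  linarith

theorem oddPart_sub (hf : ∀ s r, f (s + r) + f (s - r) = 2 * f s + f r + f (-r)) (x y : E) :
    oddPart f (x - y) = oddPart f x - oddPart f y := by
  have h₁ := hf x y
  have h₂ := hf y x
  rw [add_comm y x, ← neg_sub x y] at h₂
  unfold oddPart
  linarith

theorem oddPart_add (hf : ∀ s r, f (s + r) + f (s - r) = 2 * f s + f r + f (-r)) (x y : E) :
    oddPart f (x + y) = oddPart f x + oddPart f y := by
  have hneg : oddPart f (-y) = -oddPart f y := by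
    unfold oddPart
    rw [neg_neg]
    ring
  rw [← sub_neg_eq_add, oddPart_sub hf, hneg, sub_neg_eq_add]

theorem evenPart_add_add_evenPart_sub
    (hf : ∀ s r, f (s + r) + f (s - r) = 2 * f s + f r + f (-r)) (x y : E) :
    evenPart f (x + y) + evenPart f (x - y) = 2 * evenPart f x + 2 * evenPart f y := by
  have h₁ := hf x y
  have h₂ := hf (-x) y
  rw [neg_add_eq_sub, ← neg_sub x y, ← neg_add'] at h₂
  unfold evenPart
  linarith

theorem polar_add_left_of_parallelogram {q : E → ℝ}
    (hq : ∀ x y, q (x + y) + q (x - y) = 2 * q x + 2 * q y) (x x' y : E) :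
    polar q (x + x') y = polar q x y + polar q x' y := by
  rw [polar_add_left_iff, add_comm y x]
  have h₁ : q (x + x' + y) + q (y + (x - x')) = 2 * q (x + y) + 2 * q x' := by
    convert hq (x + y) x' using 3 <;> abel
  have h₂ : q (x + x' + y) + q (y - (x - x')) = 2 * q (x' + y) + 2 * q x := by
    convert hq (x' + y) x using 3 <;> abel
  have h₃ := hq y (x - x')
  have h₄ := hq x x'
  linarith

variable [Module ℝ E] [TopologicalSpace E] [IsTopologicalAddGroup E] [ContinuousSMul ℝ E]

theorem polar_smul_left_of_parallelogram {q : E → ℝ} (hq_cont : Continuous q)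
    (hq : ∀ x y, q (x + y) + q (x - y) = 2 * q x + 2 * q y) (a : ℝ) (x y : E) :
    polar q (a • x) y = a * polar q x y :=
  map_real_smul (AddMonoidHom.mk' (polar q · y) (polar_add_left_of_parallelogram hq · · y))
    (by simp only [AddMonoidHom.mk'_apply, polar]; fun_prop) a x

theorem exists_quadraticForm_eq_of_parallelogram {q : E → ℝ} (hq_cont : Continuous q)
    (hq : ∀ x y, q (x + y) + q (x - y) = 2 * q x + 2 * q y) :
    ∃ Q : QuadraticForm ℝ E, ⇑Q = q := by
  have hq0 : q 0 = 0 := by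
    have h := hq 0 0
    rw [add_zero, sub_zero] at h
    linarith
  have hself : ∀ x, polar q x x = 2 * q x := fun x => by
    have h := hq x x
    rw [sub_self, hq0] at h
    unfold polar
    linarith
  have hadd := polar_add_left_of_parallelogram hq
  have hsmul := polar_smul_left_of_parallelogram hq_cont hq
  let B : E →ₗ[ℝ] E →ₗ[ℝ] ℝ := LinearMap.mk₂ ℝ (fun x y => polar q x y / 2)
    (fun x x' y => by rw [hadd]; ring)
    (fun a x y => by rw [hsmul, smul_eq_mul]; ring)
    (fun x y y' => by rw [polar_comm q x, hadd, polar_comm q y, polar_comm q y']; ring)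
    (fun a x y => by rw [polar_comm, hsmul, polar_comm, smul_eq_mul]; ring)
  exact ⟨LinearMap.BilinMap.toQuadraticMap B, funext fun x => by simp [B, hself]⟩

theorem exists_linear_add_quadratic_of_map_add_add_map_sub (hf_cont : Continuous f)
    (hf : ∀ s r, f (s + r) + f (s - r) = 2 * f s + f r + f (-r)) :
    ∃ (l : E →L[ℝ] ℝ) (Q : QuadraticForm ℝ E), ∀ x, f x = l x + Q x := by
  obtain ⟨Q, hQ⟩ := exists_quadraticForm_eq_of_parallelogram (q := evenPart f)
    (by unfold evenPart; fun_prop) (evenPart_add_add_evenPart_sub hf)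
  refine ⟨(AddMonoidHom.mk' (oddPart f) (oddPart_add hf)).toRealLinearMap
    (by simp only [AddMonoidHom.mk'_apply]; unfold oddPart; fun_prop), Q, fun x => ?_⟩
  rw [hQ]
  exact (oddPart_add_evenPart f x).symm

end FunctionalEquation

theorem map_add_add_map_sub_of_shift {E : Type*} [AddCommGroup E] [Module ℝ E] {φ : E → ℝ}
    (hφ0 : φ 0 = 0)
    (hshift : ∀ (t : Fin 2 → E) (h : E) (u : Fin 2 → ℝ), (∀ i, u i ∈ Set.Icc (0 : ℝ) 1) →
      ∑ i, u i = 1 →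
      φ (∑ i, u i • t i) - ∑ i, u i * φ (t i) = φ (h + ∑ i, u i • t i) - ∑ i, u i * φ (t i + h))
    (s r : E) : φ (s + r) + φ (s - r) = 2 * φ s + φ r + φ (-r) := by
  have h := hshift ![r, -r] s ![1 / 2, 1 / 2] (fun i => by fin_cases i <;> norm_num)
    (by norm_num [Fin.sum_univ_two])
  simp only [Fin.sum_univ_two, Matrix.cons_val_zero, Matrix.cons_val_one, smul_neg,
    add_neg_cancel, add_zero, hφ0] at h
  rw [add_comm r s, neg_add_eq_sub] at h
  linarith

theorem sub_sum_eq_sub_sum_of_map_add {E ι : Type*} [AddCommGroup E] [Module ℝ E] [Fintype ι]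
    {φ : E → ℝ} {h : E} {c : ℝ} {L : E →ₗ[ℝ] ℝ} (hφ : ∀ x, φ (x + h) = φ x + c + L x)
    {t : ι → E} {u : ι → ℝ} (hu : ∑ i, u i = 1) :
    φ (∑ i, u i • t i) - ∑ i, u i * φ (t i) = φ (h + ∑ i, u i • t i) - ∑ i, u i * φ (t i + h) := by
  simp only [add_comm h, hφ, map_sum, map_smul, smul_eq_mul, mul_add, Finset.sum_add_distrib,
    ← Finset.sum_mul, hu]
  ring

section Matrix

variable {n : Type*} [Fintype n]

theorem QuadraticForm.apply_eq_dotProduct_toMatrix'_mulVec {R : Type*} [CommRing R]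
    [Invertible (2 : R)] [DecidableEq n] (Q : QuadraticForm R (n → R)) (x : n → R) :
    Q x = x ⬝ᵥ Q.toMatrix' *ᵥ x := by
  rw [QuadraticForm.toMatrix', ← Matrix.toLinearMap₂'_apply', Matrix.toLinearMap₂'_toMatrix',
    associated_eq_self_apply]

theorem exists_dotProduct_add_half_dotProduct_mulVec [DecidableEq n]
    (l : Module.Dual ℝ (n → ℝ)) (Q : QuadraticForm ℝ (n → ℝ)) (hQ : ∀ x, 0 ≤ Q x) :
    ∃ (μ : n → ℝ) (S : Matrix n n ℝ), S.IsSymm ∧ S.PosSemidef ∧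
      ∀ t, l t + Q t = μ ⬝ᵥ t + 1 / 2 * (t ⬝ᵥ S *ᵥ t) := by
  have hS : (2 • Q.toMatrix').IsSymm := Q.isSymm_toMatrix'.smul 2
  have hquad : ∀ x, x ⬝ᵥ (2 • Q.toMatrix') *ᵥ x = 2 * Q x := fun x => by
    rw [smul_mulVec, dotProduct_smul, ← Q.apply_eq_dotProduct_toMatrix'_mulVec, two_smul, two_mul]
  refine ⟨(dotProductEquiv ℝ n).symm l, 2 • Q.toMatrix', hS,
    .of_dotProduct_mulVec_nonneg (isHermitian_iff_isSymm.mpr hS) fun x => ?_, fun t => ?_⟩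
  · rw [star_trivial, hquad]
    exact mul_nonneg zero_le_two (hQ x)
  · rw [hquad, ← dotProductEquiv_apply_apply, LinearEquiv.apply_symm_apply]
    ring

theorem dotProduct_add_half_dotProduct_mulVec_add {S : Matrix n n ℝ} (hS : S.IsSymm)
    (μ x h : n → ℝ) :
    μ ⬝ᵥ (x + h) + 1 / 2 * ((x + h) ⬝ᵥ S *ᵥ (x + h))
      = μ ⬝ᵥ x + 1 / 2 * (x ⬝ᵥ S *ᵥ x) + (μ ⬝ᵥ h + 1 / 2 * (h ⬝ᵥ S *ᵥ h)) + S *ᵥ h ⬝ᵥ x := by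
  have hcross : h ⬝ᵥ S *ᵥ x = x ⬝ᵥ S *ᵥ h := by
    rw [dotProduct_mulVec, ← mulVec_transpose, hS.eq, dotProduct_comm]
  simp only [mulVec_add, dotProduct_add, add_dotProduct, hcross, dotProduct_comm x (S *ᵥ h)]
  ring

end Matrix

theorem stmt_11_general {Ω : Type*} [MeasurableSpace Ω] (P : Measure Ω) [IsProbabilityMeasure P]
    {d : ℕ} (X : Ω → (Fin d → ℝ))
    (hint : ∀ t : Fin d → ℝ, Integrable (fun ω => Real.exp (X ω ⬝ᵥ t)) P)
    (φ : (Fin d → ℝ) → ℝ)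
    (hφ : ∀ t, φ t = Real.log (∫ ω, Real.exp (X ω ⬝ᵥ t) ∂P)) :
    (∀ (n : ℕ) (t : Fin n → (Fin d → ℝ)) (h : Fin d → ℝ) (u : Fin n → ℝ),
        (∀ i, u i ∈ Set.Icc (0 : ℝ) 1) → (∑ i, u i) = 1 →
        φ (∑ i, u i • t i) - ∑ i, u i * φ (t i)
          = φ (h + ∑ i, u i • t i) - ∑ i, u i * φ (t i + h))
      ↔ ∃ (μ : Fin d → ℝ) (S : Matrix (Fin d) (Fin d) ℝ), S.IsSymm ∧ S.PosSemidef ∧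
          ∀ t : Fin d → ℝ, φ t = μ ⬝ᵥ t + (1 / 2) * (t ⬝ᵥ S.mulVec t) := by
  have hφ0 : φ 0 = 0 := by simp [hφ]
  constructor
  · intro hshift
    have hconv : ConvexOn ℝ Set.univ φ := funext hφ ▸ convexOn_log_integral_exp_dotProduct hint
    obtain ⟨l, Q, hlQ⟩ := exists_linear_add_quadratic_of_map_add_add_map_sub
      (continuousOn_univ.mp (hconv.continuousOn isOpen_univ))
      (map_add_add_map_sub_of_shift hφ0 (hshift 2))
    have hQ : ∀ x, 0 ≤ Q x := fun x => by
      have h := hconv.map_zero_le_evenPart x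
      rw [hφ0, evenPart, hlQ, hlQ, map_neg, QuadraticMap.map_neg] at h
      linarith
    obtain ⟨μ, S, hS, hS_psd, hlQS⟩ :=
      exists_dotProduct_add_half_dotProduct_mulVec l.toLinearMap Q hQ
    exact ⟨μ, S, hS, hS_psd, fun t => (hlQ t).trans (hlQS t)⟩
  · rintro ⟨μ, S, hS, -, hφS⟩ n t h u - hu
    refine sub_sum_eq_sub_sum_of_map_add (c := φ h) (L := dotProductEquiv ℝ _ (S *ᵥ h))
      (fun x => ?_) hu
    rw [hφS, hφS, hφS, dotProduct_add_half_dotProduct_mulVec_add hS, dotProductEquiv_apply_apply]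

/-- For a random vector `X` in `ℝ^d` with everywhere-finite cumulant
generating function `φ(t) = log E[exp⟨X,t⟩]`, the shift-invariance identity over convex
combinations holds if and only if `φ(t) = ⟨μ,t⟩ + ½⟨t,Σt⟩` for some `μ ∈ ℝ^d` and some
symmetric positive semidefinite matrix `Σ`. -/
theorem stmt_11 {Ω : Type*} [MeasurableSpace Ω] (P : Measure Ω) [IsProbabilityMeasure P]
    {d : ℕ} (X : Ω → (Fin d → ℝ)) (hX : Measurable X)
    (hint : ∀ t : Fin d → ℝ, Integrable (fun ω => Real.exp (X ω ⬝ᵥ t)) P)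
    (φ : (Fin d → ℝ) → ℝ)
    (hφ : ∀ t, φ t = Real.log (∫ ω, Real.exp (X ω ⬝ᵥ t) ∂P)) :
    (∀ (n : ℕ) (t : Fin n → (Fin d → ℝ)) (h : Fin d → ℝ) (u : Fin n → ℝ),
        (∀ i, u i ∈ Set.Icc (0 : ℝ) 1) → (∑ i, u i) = 1 →
        φ (∑ i, u i • t i) - ∑ i, u i * φ (t i)
          = φ (h + ∑ i, u i • t i) - ∑ i, u i * φ (t i + h))
      ↔ ∃ (μ : Fin d → ℝ) (S : Matrix (Fin d) (Fin d) ℝ), S.IsSymm ∧ S.PosSemidef ∧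
          ∀ t : Fin d → ℝ, φ t = μ ⬝ᵥ t + (1 / 2) * (t ⬝ᵥ S.mulVec t) :=
  stmt_11_general P X hint φ hφ
end
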